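/- Restricted Polyak–Łojasiewicz inequality: if X is full-rank, then for any sublevel set 𝒲 = {w : L¹(w) ≤ l} there exists c > 0 such that c·L¹(w) ≤ (1/2)‖∇L¹(w)‖² for all w ∈ 𝒲. -/

import Mathlib

/-!
Statement 0: The gradient of the normalized cross-entropy distillation loss
L¹(w) = (1/n) Σᵢ ℓᵢ(wᵀxᵢ) equals (1/n) Σᵢ (σ(wᵀxᵢ) − yᵢ)·xᵢ, where yᵢ = σ(w*ᵀxᵢ),
and hence ∇L¹(w) always lies in the span of the data vectors x₁,…,xₙ.
-/

open Real Matrix Finset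
open scoped RealInnerProductSpace BigOperators

noncomputable section

abbrev E (d : ℕ) := EuclideanSpace ℝ (Fin d)

/-- The _root_.sigmoid function σ(u) = 1/(1+e^{−u}). -/
def sigmoid (u : ℝ) : ℝ := 1 / (1 + Real.exp (-u))

/-- Per-instance normalized cross-entropy loss ℓ(u) for soft label y,
ℓ(u) = −y log σ(u) − (1−y) log(1−σ(u)) − ℓ*, with ℓ* = −y log y − (1−y) log(1−y). -/
def perLoss (y u : ℝ) : ℝ :=
  (-(y * Real.log (_root_.sigmoid u)) - (1 - y) * Real.log (1 - _root_.sigmoid u))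
    - (-(y * Real.log y) - (1 - y) * Real.log (1 - y))

/-- The normalized cross-entropy distillation loss L¹(w) = (1/n) Σᵢ ℓᵢ(⟪w,xᵢ⟫)
with soft labels yᵢ = σ(⟪w*,xᵢ⟫). -/
def distillLoss {d n : ℕ} (x : Fin n → E d) (wstar : E d) (w : E d) : ℝ :=
  (n : ℝ)⁻¹ * ∑ i, perLoss (_root_.sigmoid ⟪wstar, x i⟫) ⟪w, x i⟫

/-- The data matrix X = [x₁,…,xₙ] ∈ ℝ^{d×n} whose columns are the data points. -/
def Xmat {d n : ℕ} (x : Fin n → E d) : Matrix (Fin d) (Fin n) ℝ :=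
  Matrix.of fun k i => x i k

open scoped NNReal

noncomputable section

lemma sigmoid_pos (u : ℝ) : 0 < _root_.sigmoid u := by
  unfold _root_.sigmoid; positivity

lemma one_sub_sigmoid (u : ℝ) : 1 - _root_.sigmoid u = Real.exp (-u) / (1 + Real.exp (-u)) := by
  unfold _root_.sigmoid
  have h : (0:ℝ) < 1 + Real.exp (-u) := by positivity
  field_simp
  ring

lemma one_sub_sigmoid_pos (u : ℝ) : 0 < 1 - _root_.sigmoid u := by
  rw [one_sub_sigmoid]; positivity

lemma sigmoid_lt_one (u : ℝ) : _root_.sigmoid u < 1 := by linarith [one_sub_sigmoid_pos u]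

lemma sigmoid_eq (u : ℝ) : _root_.sigmoid u = Real.exp u / (1 + Real.exp u) := by
  unfold _root_.sigmoid
  rw [Real.exp_neg]
  have h : (0:ℝ) < Real.exp u := Real.exp_pos u
  field_simp
  ring

lemma sigmoid_sub (a b : ℝ) :
    _root_.sigmoid a - _root_.sigmoid b = (Real.exp a - Real.exp b) / ((1 + Real.exp a) * (1 + Real.exp b)) := by
  rw [sigmoid_eq, sigmoid_eq]
  have ha : (0:ℝ) < 1 + Real.exp a := by positivity
  have hb : (0:ℝ) < 1 + Real.exp b := by positivity
  field_simp
  ring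

lemma hasDerivAt_sigmoid (u : ℝ) :
    HasDerivAt _root_.sigmoid (_root_.sigmoid u * (1 - _root_.sigmoid u)) u := by
  have h1 : HasDerivAt (fun u : ℝ => 1 + Real.exp (-u)) (-Real.exp (-u)) u := by
    have := (Real.hasDerivAt_exp (-u)).comp u ((hasDerivAt_id u).neg)
    simpa using (this.const_add 1)
  have hne : (1 + Real.exp (-u)) ≠ 0 := by positivity
  have h2 := h1.inv hne
  have heq : _root_.sigmoid = fun y : ℝ => (1 + Real.exp (-y))⁻¹ := by
    funext y; simp [_root_.sigmoid]
  have : HasDerivAt _root_.sigmoid (Real.exp (-u) / (1 + Real.exp (-u)) ^ 2) u := by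
    rw [heq]
    have h3 : HasDerivAt (fun u : ℝ => 1 + Real.exp (-u))⁻¹ (Real.exp (-u) / (1 + Real.exp (-u)) ^ 2) u := by
      simpa using h2
    exact h3
  convert this using 1
  rw [one_sub_sigmoid]
  unfold _root_.sigmoid
  field_simp

lemma sigmoid_mono : Monotone _root_.sigmoid := by
  intro a b hab
  have : Real.exp (-b) ≤ Real.exp (-a) := Real.exp_le_exp.2 (by linarith)
  unfold _root_.sigmoid
  apply div_le_div_of_nonneg_left (by norm_num) (by positivity) (by linarith)

lemma sigmoid_lipschitz (a b : ℝ) : |_root_.sigmoid a - _root_.sigmoid b| ≤ (1/4) * |a - b| := by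
  have h : ∀ u : ℝ, ‖deriv _root_.sigmoid u‖₊ ≤ (1/4 : ℝ≥0) := by
    intro u
    have hd := (_root_.hasDerivAt_sigmoid u).deriv
    rw [hd]
    have h1 := _root_.sigmoid_pos u
    have h2 := one_sub_sigmoid_pos u
    have : _root_.sigmoid u * (1 - _root_.sigmoid u) ≤ 1/4 := by nlinarith [sq_nonneg (_root_.sigmoid u - 1/2)]
    rw [← NNReal.coe_le_coe]
    push_cast
    rw [Real.norm_eq_abs, abs_of_pos (by positivity)]
    simpa using this
  have := lipschitzWith_of_nnnorm_deriv_le (fun u => (_root_.hasDerivAt_sigmoid u).differentiableAt) h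
  have := this.dist_le_mul a b
  simpa [Real.dist_eq] using this

lemma hasDerivAt_perLoss (y u : ℝ) :
    HasDerivAt (perLoss y) (_root_.sigmoid u - y) u := by
  have hs := _root_.hasDerivAt_sigmoid u
  have h1 : HasDerivAt (fun u => Real.log (_root_.sigmoid u))
      ((_root_.sigmoid u)⁻¹ * (_root_.sigmoid u * (1 - _root_.sigmoid u))) u := by
    simpa [Function.comp_def] using (Real.hasDerivAt_log (_root_.sigmoid_pos u).ne').comp u hs
  have h2 : HasDerivAt (fun u => Real.log (1 - _root_.sigmoid u))
      ((1 - _root_.sigmoid u)⁻¹ * (-(_root_.sigmoid u * (1 - _root_.sigmoid u)))) u := by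
    have hsub : HasDerivAt (fun u => 1 - _root_.sigmoid u) (-(_root_.sigmoid u * (1 - _root_.sigmoid u))) u :=
      (hs.const_sub 1)
    simpa [Function.comp_def] using (Real.hasDerivAt_log (one_sub_sigmoid_pos u).ne').comp u hsub
  have h3 : HasDerivAt (perLoss y)
      (-(y * ((_root_.sigmoid u)⁻¹ * (_root_.sigmoid u * (1 - _root_.sigmoid u))))
        - (1 - y) * ((1 - _root_.sigmoid u)⁻¹ * (-(_root_.sigmoid u * (1 - _root_.sigmoid u))))) u := by
    unfold perLoss
    exact (((h1.const_mul y).neg).sub (h2.const_mul (1 - y))).sub_const _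
  convert h3 using 1
  have hp := (_root_.sigmoid_pos u).ne'
  have hq := (one_sub_sigmoid_pos u).ne'
  field_simp
  ring

/-- perLoss as binary KL divergence. -/

lemma perLoss_eq (y u : ℝ) :
    perLoss y u = y * (Real.log y - Real.log (_root_.sigmoid u))
      + (1 - y) * (Real.log (1 - y) - Real.log (1 - _root_.sigmoid u)) := by
  unfold perLoss; ring

lemma klBin_nonneg {y p : ℝ} (hy0 : 0 < y) (hy1 : y < 1) (hp0 : 0 < p) (hp1 : p < 1) :
    0 ≤ y * (Real.log y - Real.log p) + (1 - y) * (Real.log (1 - y) - Real.log (1 - p)) := by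
  have h1 : Real.log p - Real.log y ≤ p / y - 1 := by
    rw [← Real.log_div hp0.ne' hy0.ne']
    exact Real.log_le_sub_one_of_pos (div_pos hp0 hy0)
  have h2 : Real.log (1 - p) - Real.log (1 - y) ≤ (1 - p) / (1 - y) - 1 := by
    rw [← Real.log_div (by linarith) (by linarith)]
    exact Real.log_le_sub_one_of_pos (div_pos (by linarith) (by linarith))
  have hyne : y ≠ 0 := hy0.ne'
  have hyne1 : (1 : ℝ) - y ≠ 0 := by linarith
  have e1 : y * (p / y - 1) = p - y := by field_simp
  have e2 : (1 - y) * ((1 - p) / (1 - y) - 1) = y - p := by field_simp; ring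
  nlinarith [mul_le_mul_of_nonneg_left h1 hy0.le, mul_le_mul_of_nonneg_left h2 (by linarith : (0:ℝ) ≤ 1 - y)]

lemma perLoss_nonneg {y : ℝ} (hy0 : 0 < y) (hy1 : y < 1) (u : ℝ) : 0 ≤ perLoss y u := by
  rw [perLoss_eq]
  exact klBin_nonneg hy0 hy1 (_root_.sigmoid_pos u) (_root_.sigmoid_lt_one u)

/-- reverse Pinsker / chi-square bound. -/

lemma perLoss_le_chi2 {y : ℝ} (hy0 : 0 < y) (hy1 : y < 1) (u : ℝ) :
    perLoss y u ≤ (_root_.sigmoid u - y) ^ 2 / (_root_.sigmoid u * (1 - _root_.sigmoid u)) := by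
  have hp0 := _root_.sigmoid_pos u
  have hp1 := _root_.sigmoid_lt_one u
  rw [perLoss_eq]
  have h1 : Real.log y - Real.log (_root_.sigmoid u) ≤ y / _root_.sigmoid u - 1 := by
    rw [← Real.log_div hy0.ne' hp0.ne']
    exact Real.log_le_sub_one_of_pos (div_pos hy0 hp0)
  have h2 : Real.log (1 - y) - Real.log (1 - _root_.sigmoid u) ≤ (1 - y) / (1 - _root_.sigmoid u) - 1 := by
    rw [← Real.log_div (by linarith) (by linarith)]
    exact Real.log_le_sub_one_of_pos (div_pos (by linarith) (by linarith))
  have hpp : _root_.sigmoid u * (1 - _root_.sigmoid u) ≠ 0 := by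
    apply mul_ne_zero hp0.ne' (by linarith)
  have key : y * (y / _root_.sigmoid u - 1) + (1 - y) * ((1 - y) / (1 - _root_.sigmoid u) - 1)
      = (_root_.sigmoid u - y) ^ 2 / (_root_.sigmoid u * (1 - _root_.sigmoid u)) := by
    have hpa : _root_.sigmoid u ≠ 0 := hp0.ne'
    have hpb : (1:ℝ) - _root_.sigmoid u ≠ 0 := by linarith
    rw [eq_div_iff hpp]
    field_simp
    ring
  have := add_le_add (mul_le_mul_of_nonneg_left h1 hy0.le)
    (mul_le_mul_of_nonneg_left h2 (by linarith : (0:ℝ) ≤ 1 - y))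
  rw [key] at this
  exact this

/-- If perLoss is bounded, _root_.sigmoid is bounded below. -/

lemma sigmoid_lower_of_perLoss_le {y u K : ℝ} (hy0 : 0 < y) (hy1 : y < 1)
    (h : perLoss y u ≤ K) :
    y * Real.exp (-((K - (1 - y) * Real.log (1 - y)) / y)) ≤ _root_.sigmoid u := by
  have hp0 := _root_.sigmoid_pos u
  have hp1 := _root_.sigmoid_lt_one u
  rw [perLoss_eq] at h
  have hlog : Real.log (1 - _root_.sigmoid u) ≤ 0 :=
    Real.log_nonpos (by linarith) (by linarith)
  have h2 : (1 - y) * Real.log (1 - y) ≤ (1 - y) * (Real.log (1 - y) - Real.log (1 - _root_.sigmoid u)) := by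
    have : (0:ℝ) ≤ 1 - y := by linarith
    nlinarith
  have h3 : y * (Real.log y - Real.log (_root_.sigmoid u)) ≤ K - (1 - y) * Real.log (1 - y) := by
    linarith
  have h4 : Real.log y - Real.log (_root_.sigmoid u) ≤ (K - (1 - y) * Real.log (1 - y)) / y := by
    rw [le_div_iff₀ hy0]
    nlinarith
  have h5 : Real.log y - (K - (1 - y) * Real.log (1 - y)) / y ≤ Real.log (_root_.sigmoid u) := by
    linarith
  calc y * Real.exp (-((K - (1 - y) * Real.log (1 - y)) / y))
      = Real.exp (Real.log y - (K - (1 - y) * Real.log (1 - y)) / y) := by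
        rw [Real.exp_sub, Real.exp_log hy0, Real.exp_neg]
        ring
    _ ≤ Real.exp (Real.log (_root_.sigmoid u)) := Real.exp_le_exp.2 h5
    _ = _root_.sigmoid u := Real.exp_log hp0

/-- If perLoss is bounded, 1 - _root_.sigmoid is bounded below. -/

lemma one_sub_sigmoid_lower_of_perLoss_le {y u K : ℝ} (hy0 : 0 < y) (hy1 : y < 1)
    (h : perLoss y u ≤ K) :
    (1 - y) * Real.exp (-((K - y * Real.log y) / (1 - y))) ≤ 1 - _root_.sigmoid u := by
  have hp0 := _root_.sigmoid_pos u
  have hp1 := _root_.sigmoid_lt_one u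
  rw [perLoss_eq] at h
  have hlog : Real.log (_root_.sigmoid u) ≤ 0 :=
    Real.log_nonpos hp0.le hp1.le
  have h2 : y * Real.log y ≤ y * (Real.log y - Real.log (_root_.sigmoid u)) := by nlinarith
  have h3 : (1 - y) * (Real.log (1 - y) - Real.log (1 - _root_.sigmoid u)) ≤ K - y * Real.log y := by
    linarith
  have hy1' : (0:ℝ) < 1 - y := by linarith
  have h4 : Real.log (1 - y) - Real.log (1 - _root_.sigmoid u) ≤ (K - y * Real.log y) / (1 - y) := by
    rw [le_div_iff₀ hy1']
    nlinarith
  have h5 : Real.log (1 - y) - (K - y * Real.log y) / (1 - y) ≤ Real.log (1 - _root_.sigmoid u) := by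
    linarith
  calc (1 - y) * Real.exp (-((K - y * Real.log y) / (1 - y)))
      = Real.exp (Real.log (1 - y) - (K - y * Real.log y) / (1 - y)) := by
        rw [Real.exp_sub, Real.exp_log hy1', Real.exp_neg]
        ring
    _ ≤ Real.exp (Real.log (1 - _root_.sigmoid u)) := Real.exp_le_exp.2 h5
    _ = 1 - _root_.sigmoid u := Real.exp_log (by linarith)

/-- _root_.sigmoid lower bound gives lower bound on u. -/

lemma le_of_sigmoid_le {ε u : ℝ} (hε : 0 < ε) (h : ε ≤ _root_.sigmoid u) : Real.log ε ≤ u := by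
  have h1 : Real.exp (-u) ≤ 1 / ε := by
    have h2 : ε * (1 + Real.exp (-u)) ≤ 1 := by
      have := (le_div_iff₀ (by positivity : (0:ℝ) < 1 + Real.exp (-u))).1 h
      linarith [this]
    have h3 : (1 : ℝ) + Real.exp (-u) ≤ 1 / ε := by
      rw [le_div_iff₀ hε]; linarith
    linarith [Real.exp_pos (-u)]
  have := Real.log_le_log (Real.exp_pos _) h1
  rw [Real.log_exp, Real.log_div one_ne_zero hε.ne', Real.log_one] at this
  linarith

/-- 1 - _root_.sigmoid lower bound gives upper bound on u. -/

lemma le_of_one_sub_sigmoid {ε u : ℝ} (hε : 0 < ε) (h : ε ≤ 1 - _root_.sigmoid u) :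
    u ≤ -Real.log ε := by
  rw [one_sub_sigmoid] at h
  have hd : (0:ℝ) < 1 + Real.exp (-u) := by positivity
  have h1 : ε ≤ Real.exp (-u) := by
    calc ε ≤ Real.exp (-u) / (1 + Real.exp (-u)) := h
      _ ≤ Real.exp (-u) / 1 := by
          apply div_le_div_of_nonneg_left (Real.exp_pos _).le one_pos
          linarith [Real.exp_pos (-u)]
      _ = Real.exp (-u) := by ring
  have := Real.log_le_log hε h1
  rw [Real.log_exp] at this
  linarith

/-- Lower Lipschitz bound for _root_.sigmoid on a bounded interval, in product form. -/

lemma sigmoid_lower_lipschitz {B a b : ℝ} (hB : 0 ≤ B) (ha : |a| ≤ B) (hb : |b| ≤ B) :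
    (Real.exp (-B) / (1 + Real.exp B) ^ 2) * (a - b) ^ 2
      ≤ (_root_.sigmoid a - _root_.sigmoid b) * (a - b) := by
  have key : ∀ a b : ℝ, |a| ≤ B → |b| ≤ B → b ≤ a →
      (Real.exp (-B) / (1 + Real.exp B) ^ 2) * (a - b) ^ 2
        ≤ (_root_.sigmoid a - _root_.sigmoid b) * (a - b) := by
    intro a b ha hb hle
    rw [sigmoid_sub]
    rcases abs_le.1 ha with ⟨ha1, ha2⟩
    rcases abs_le.1 hb with ⟨hb1, hb2⟩
    have hea : Real.exp a ≤ Real.exp B := Real.exp_le_exp.2 ha2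
    have heb : Real.exp b ≤ Real.exp B := Real.exp_le_exp.2 hb2
    have hebl : Real.exp (-B) ≤ Real.exp b := Real.exp_le_exp.2 (by linarith)
    have hnum : Real.exp (-B) * (a - b) ≤ Real.exp a - Real.exp b := by
      have h1 : (a - b) + 1 ≤ Real.exp (a - b) := by
        linarith [Real.add_one_le_exp (a - b)]
      have h2 : Real.exp b * ((a - b) + 1) ≤ Real.exp b * Real.exp (a - b) := by
        apply mul_le_mul_of_nonneg_left h1 (Real.exp_pos b).le
      rw [← Real.exp_add] at h2
      have h3 : Real.exp b * (a - b) ≤ Real.exp a - Real.exp b := by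
        have : b + (a - b) = a := by ring
        rw [this] at h2
        nlinarith
      nlinarith [Real.exp_pos b, sub_nonneg.2 hle, mul_le_mul_of_nonneg_right hebl (sub_nonneg.2 hle)]
    have hden : (0:ℝ) < (1 + Real.exp a) * (1 + Real.exp b) := by positivity
    have hdenB : (1 + Real.exp a) * (1 + Real.exp b) ≤ (1 + Real.exp B) ^ 2 := by
      nlinarith [Real.exp_pos a, Real.exp_pos b]
    have hBp : (0:ℝ) < (1 + Real.exp B) ^ 2 := by positivity
    have step1 : Real.exp (-B) / (1 + Real.exp B) ^ 2 * (a - b)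
        ≤ (Real.exp a - Real.exp b) / ((1 + Real.exp a) * (1 + Real.exp b)) := by
      rw [div_mul_eq_mul_div, div_le_div_iff₀ hBp hden]
      have hsub : (0:ℝ) ≤ Real.exp a - Real.exp b := by
        linarith [Real.exp_le_exp.2 hle]
      calc Real.exp (-B) * (a - b) * ((1 + Real.exp a) * (1 + Real.exp b))
          ≤ (Real.exp a - Real.exp b) * ((1 + Real.exp a) * (1 + Real.exp b)) := by
            apply mul_le_mul_of_nonneg_right hnum hden.le
        _ ≤ (Real.exp a - Real.exp b) * (1 + Real.exp B) ^ 2 := by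
            apply mul_le_mul_of_nonneg_left hdenB hsub
    have hab : (0:ℝ) ≤ a - b := sub_nonneg.2 hle
    calc Real.exp (-B) / (1 + Real.exp B) ^ 2 * (a - b) ^ 2
        = (Real.exp (-B) / (1 + Real.exp B) ^ 2 * (a - b)) * (a - b) := by ring
      _ ≤ ((Real.exp a - Real.exp b) / ((1 + Real.exp a) * (1 + Real.exp b))) * (a - b) :=
          mul_le_mul_of_nonneg_right step1 hab
  rcases le_total b a with h | h
  · exact key a b ha hb h
  · have := key b a hb ha h
    nlinarith [this]

lemma hasGradientAt_distillLoss {d n : ℕ} (x : Fin n → E d) (wstar w : E d) :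
    HasGradientAt (distillLoss x wstar)
      ((n : ℝ)⁻¹ • ∑ i, (_root_.sigmoid ⟪w, x i⟫ - _root_.sigmoid ⟪wstar, x i⟫) • x i) w := by
  have hterm : ∀ i : Fin n, HasFDerivAt (fun w : E d => perLoss (_root_.sigmoid ⟪wstar, x i⟫) ⟪w, x i⟫)
      ((_root_.sigmoid ⟪w, x i⟫ - _root_.sigmoid ⟪wstar, x i⟫) • (innerSL ℝ (x i))) w := by
    intro i
    have hlin : HasFDerivAt (fun w : E d => ⟪w, x i⟫) (innerSL ℝ (x i)) w := by
      have : (fun w : E d => ⟪w, x i⟫) = fun w : E d => (innerSL ℝ (x i)) w := by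
        funext v
        exact (real_inner_comm v (x i)).symm
      rw [this]
      exact (innerSL ℝ (x i)).hasFDerivAt
    exact (hasDerivAt_perLoss (_root_.sigmoid ⟪wstar, x i⟫) ⟪w, x i⟫).comp_hasFDerivAt w hlin
  have hsum : HasFDerivAt (fun w : E d => ∑ i, perLoss (_root_.sigmoid ⟪wstar, x i⟫) ⟪w, x i⟫)
      (∑ i, (_root_.sigmoid ⟪w, x i⟫ - _root_.sigmoid ⟪wstar, x i⟫) • (innerSL ℝ (x i))) w :=
    HasFDerivAt.fun_sum (fun i _ => hterm i)
  have hfull : HasFDerivAt (distillLoss x wstar)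
      ((n:ℝ)⁻¹ • ∑ i, (_root_.sigmoid ⟪w, x i⟫ - _root_.sigmoid ⟪wstar, x i⟫) • (innerSL ℝ (x i))) w := by
    unfold distillLoss
    exact hsum.const_mul _
  rw [hasGradientAt_iff_hasFDerivAt]
  refine hfull.congr_fderiv ?_
  ext v
  simp only [InnerProductSpace.toDual_apply_apply, ContinuousLinearMap.smul_apply,
    ContinuousLinearMap.sum_apply, innerSL_apply_apply, inner_smul_left, sum_inner,
    RCLike.conj_to_real, smul_eq_mul]

/-- The synthesis map r ↦ Σ rᵢ xᵢ as a linear map. -/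

def Tlin {d n : ℕ} (x : Fin n → E d) : EuclideanSpace ℝ (Fin n) →ₗ[ℝ] E d where
  toFun r := ∑ i, r i • x i
  map_add' a b := by
    simp [add_smul, Finset.sum_add_distrib]
  map_smul' c a := by
    simp [smul_smul, Finset.smul_sum]

/-- The analysis map w ↦ (⟪w,xᵢ⟫)ᵢ as a linear map. -/

def Slin {d n : ℕ} (x : Fin n → E d) : E d →ₗ[ℝ] EuclideanSpace ℝ (Fin n) where
  toFun v := WithLp.toLp 2 (fun i => ⟪v, x i⟫ : Fin n → ℝ)
  map_add' a b := by
    ext i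
    simp [inner_add_left]
  map_smul' c a := by
    ext i
    simp [inner_smul_left]

lemma euclid_sum_apply {k n : ℕ} (f : Fin n → E k) (j : Fin k) :
    (∑ i, f i) j = ∑ i, f i j :=
  by rw [WithLp.ofLp_sum]; exact Finset.sum_apply j Finset.univ _

lemma mulVecLin_injective_of_rank {m k : ℕ} (M : Matrix (Fin m) (Fin k) ℝ)
    (h : M.rank = k) : LinearMap.ker M.mulVecLin = ⊥ := by
  have h1 := LinearMap.finrank_range_add_finrank_ker M.mulVecLin
  rw [Matrix.rank] at h
  have hdom : Module.finrank ℝ (Fin k → ℝ) = k := by simp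
  rw [hdom, h] at h1
  have hker : Module.finrank ℝ (LinearMap.ker M.mulVecLin) = 0 := by omega
  exact Submodule.finrank_eq_zero.1 hker

lemma Tlin_ker {d n : ℕ} (x : Fin n → E d) (hrank : (Xmat x).rank = n) :
    LinearMap.ker (Tlin x) = ⊥ := by
  have hM := mulVecLin_injective_of_rank (Xmat x) hrank
  rw [LinearMap.ker_eq_bot'] at hM ⊢
  intro r hr
  apply WithLp.ofLp_injective (p := 2)
  apply hM r
  funext k
  have : (Tlin x) r k = 0 := by rw [hr]; rfl
  rw [show ((Tlin x) r : E d) = ∑ i, r i • x i from rfl,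
    euclid_sum_apply (fun i => r i • x i) k] at this
  simp only [PiLp.smul_apply, smul_eq_mul] at this
  simpa [Xmat, Matrix.mulVecLin, Matrix.mulVec, dotProduct, mul_comm] using this

lemma Slin_ker {d n : ℕ} (x : Fin n → E d) (hrank : (Xmat x).rank = d) :
    LinearMap.ker (Slin x) = ⊥ := by
  have hT : (Xmat x)ᵀ.rank = d := by rw [Matrix.rank_transpose]; exact hrank
  have hM := mulVecLin_injective_of_rank (Xmat x)ᵀ hT
  rw [LinearMap.ker_eq_bot'] at hM ⊢
  intro v hv
  apply WithLp.ofLp_injective (p := 2)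
  apply hM v
  funext i
  have : (Slin x) v i = 0 := by rw [hv]; rfl
  simpa [Slin, Xmat, Matrix.mulVecLin, Matrix.mulVec, dotProduct, mul_comm,
    Matrix.transpose_apply, Matrix.vecMul, PiLp.inner_apply, RCLike.inner_apply, conj_trivial] using this

lemma inner_Tlin {d n : ℕ} (x : Fin n → E d) (r : EuclideanSpace ℝ (Fin n)) (v : E d) :
    ⟪(Tlin x) r, v⟫ = ∑ i, r i * ⟪v, x i⟫ := by
  rw [show ((Tlin x) r : E d) = ∑ i, r i • x i from rfl, sum_inner]
  congr 1
  funext i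
  rw [real_inner_smul_left, real_inner_comm]

lemma euclid_norm_sq {n : ℕ} (r : EuclideanSpace ℝ (Fin n)) : ‖r‖ ^ 2 = ∑ i, r i ^ 2 := by
  rw [EuclideanSpace.norm_eq, Real.sq_sqrt (by positivity)]
  congr 1
  funext i
  rw [Real.norm_eq_abs, sq_abs]

lemma antilip_norm_le {F G : Type*} [NormedAddCommGroup F] [NormedAddCommGroup G]
    [NormedSpace ℝ F] [NormedSpace ℝ G] {f : F →ₗ[ℝ] G} {K : ℝ≥0}
    (h : AntilipschitzWith K f) (v : F) : ‖v‖ ≤ (K : ℝ) * ‖f v‖ := by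
  have := h.le_mul_dist v 0
  simpa [dist_eq_norm, map_zero] using this

/-!
Statement 6 (Restricted Polyak–Łojasiewicz): if X is full-rank, then for any sublevel set
𝒲 = {w : L¹(w) ≤ l} there exists c > 0 such that c·L¹(w) ≤ (1/2)‖∇L¹(w)‖² on 𝒲.
-/

set_option maxHeartbeats 1000000 in
theorem restricted_PL {d n : ℕ} (hn : 0 < n)
    (x : Fin n → E d) (wstar : E d)
    (hrank : (Xmat x).rank = min d n) (l : ℝ) :
    ∃ c > (0 : ℝ), ∀ w : E d, distillLoss x wstar w ≤ l →
      c * distillLoss x wstar w ≤ 1 / 2 * ‖gradient (distillLoss x wstar) w‖ ^ 2 := by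
  haveI : Nonempty (Fin n) := ⟨⟨0, hn⟩⟩
  have hn' : (0:ℝ) < n := by exact_mod_cast hn
  set y : Fin n → ℝ := fun i => _root_.sigmoid ⟪wstar, x i⟫ with hy
  have hy0 : ∀ i, 0 < y i := fun i => _root_.sigmoid_pos _
  have hy1 : ∀ i, y i < 1 := fun i => _root_.sigmoid_lt_one _
  have hLnonneg : ∀ w, 0 ≤ distillLoss x wstar w := by
    intro w
    unfold distillLoss
    apply mul_nonneg (by positivity)
    exact Finset.sum_nonneg fun i _ => perLoss_nonneg (hy0 i) (hy1 i) _
  by_cases hl : l < 0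
  · exact ⟨1, one_pos, fun w hw => absurd ((hLnonneg w).trans hw) (by linarith)⟩
  push_neg at hl
  -- residual vector
  set R : E d → EuclideanSpace ℝ (Fin n) :=
    fun w => WithLp.toLp 2 (fun i => _root_.sigmoid ⟪w, x i⟫ - y i : Fin n → ℝ) with hR
  -- gradient formula
  have hgrad : ∀ w : E d, gradient (distillLoss x wstar) w = (n:ℝ)⁻¹ • (Tlin x) (R w) := by
    intro w
    exact (hasGradientAt_distillLoss x wstar w).gradient
  have hgradnorm : ∀ w : E d, ‖gradient (distillLoss x wstar) w‖
      = (n:ℝ)⁻¹ * ‖(Tlin x) (R w)‖ := by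
    intro w
    rw [hgrad w, norm_smul]
    congr 1
    simp [abs_of_pos (by positivity : (0:ℝ) < (n:ℝ)⁻¹)]
  -- per-term bound on sublevel set
  have hper : ∀ w : E d, distillLoss x wstar w ≤ l → ∀ i, perLoss (y i) ⟪w, x i⟫ ≤ n * l := by
    intro w hw i
    have hsum : ∑ j, perLoss (y j) ⟪w, x j⟫ ≤ n * l := by
      unfold distillLoss at hw
      rw [inv_mul_le_iff₀ hn'] at hw
      exact hw
    exact le_trans (Finset.single_le_sum (f := fun j => perLoss (y j) ⟪w, x j⟫)
      (fun j _ => perLoss_nonneg (hy0 j) (hy1 j) _) (Finset.mem_univ i)) hsum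
  -- uniform lower bound ε on _root_.sigmoid and 1 - _root_.sigmoid over the sublevel set
  set ε : ℝ := Finset.univ.inf' Finset.univ_nonempty (fun i =>
    min (y i * Real.exp (-((n * l - (1 - y i) * Real.log (1 - y i)) / y i)))
        ((1 - y i) * Real.exp (-((n * l - y i * Real.log (y i)) / (1 - y i))))) with hε
  have hε0 : 0 < ε := by
    rw [hε, Finset.lt_inf'_iff]
    intro i _
    exact lt_min (mul_pos (hy0 i) (Real.exp_pos _))
      (mul_pos (by linarith [hy1 i]) (Real.exp_pos _))
  have hεle : ∀ w : E d, distillLoss x wstar w ≤ l → ∀ i,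
      ε ≤ _root_.sigmoid ⟪w, x i⟫ ∧ ε ≤ 1 - _root_.sigmoid ⟪w, x i⟫ := by
    intro w hw i
    have h := hper w hw i
    have h1 := Finset.inf'_le (b := i)
      (fun i => min (y i * Real.exp (-((n * l - (1 - y i) * Real.log (1 - y i)) / y i)))
        ((1 - y i) * Real.exp (-((n * l - y i * Real.log (y i)) / (1 - y i)))))
      (Finset.mem_univ i)
    constructor
    · exact le_trans (le_trans h1 (min_le_left _ _))
        (sigmoid_lower_of_perLoss_le (hy0 i) (hy1 i) h)
    · exact le_trans (le_trans h1 (min_le_right _ _))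
        (one_sub_sigmoid_lower_of_perLoss_le (hy0 i) (hy1 i) h)
  have hε1 : ε < 1 := by
    obtain ⟨i0⟩ := (inferInstance : Nonempty (Fin n))
    have h1 : ε ≤ y i0 * Real.exp (-((n * l - (1 - y i0) * Real.log (1 - y i0)) / y i0)) := by
      rw [hε]
      exact le_trans (Finset.inf'_le _ (Finset.mem_univ i0)) (min_le_left _ _)
    apply lt_of_le_of_lt h1
    have hA : 0 ≤ (n * l - (1 - y i0) * Real.log (1 - y i0)) / y i0 := by
      apply div_nonneg _ (hy0 i0).le
      have := Real.log_nonpos (by linarith [hy1 i0]) (by linarith [hy0 i0]) (x := 1 - y i0)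
      nlinarith [hy1 i0, mul_pos hn' (lt_of_lt_of_le (by norm_num : (0:ℝ) < 1) (le_refl 1))]
    calc y i0 * Real.exp (-((n * l - (1 - y i0) * Real.log (1 - y i0)) / y i0))
        ≤ y i0 * 1 := by
          apply mul_le_mul_of_nonneg_left _ (hy0 i0).le
          rw [Real.exp_le_one_iff]
          linarith
      _ < 1 := by rw [mul_one]; exact hy1 i0
  -- chi-square bound: loss controlled by squared residual
  have hchi : ∀ w : E d, distillLoss x wstar w ≤ l →
      distillLoss x wstar w ≤ (n:ℝ)⁻¹ * (ε * ε)⁻¹ * ‖R w‖ ^ 2 := by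
    intro w hw
    have hterm : ∀ i, perLoss (y i) ⟪w, x i⟫ ≤ (R w i) ^ 2 / (ε * ε) := by
      intro i
      obtain ⟨he1, he2⟩ := hεle w hw i
      have hp0 := _root_.sigmoid_pos ⟪w, x i⟫
      have hp1 := _root_.sigmoid_lt_one ⟪w, x i⟫
      have hee : ε * ε ≤ _root_.sigmoid ⟪w, x i⟫ * (1 - _root_.sigmoid ⟪w, x i⟫) :=
        mul_le_mul he1 he2 hε0.le hp0.le
      calc perLoss (y i) ⟪w, x i⟫
          ≤ (_root_.sigmoid ⟪w, x i⟫ - y i) ^ 2 / (_root_.sigmoid ⟪w, x i⟫ * (1 - _root_.sigmoid ⟪w, x i⟫)) :=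
            perLoss_le_chi2 (hy0 i) (hy1 i) _
        _ ≤ (_root_.sigmoid ⟪w, x i⟫ - y i) ^ 2 / (ε * ε) :=
            div_le_div_of_nonneg_left (sq_nonneg _) (by positivity) hee
        _ = (R w i) ^ 2 / (ε * ε) := rfl
    calc distillLoss x wstar w
        = (n:ℝ)⁻¹ * ∑ i, perLoss (y i) ⟪w, x i⟫ := rfl
      _ ≤ (n:ℝ)⁻¹ * ∑ i, (R w i) ^ 2 / (ε * ε) := by
          apply mul_le_mul_of_nonneg_left _ (by positivity)
          exact Finset.sum_le_sum fun i _ => hterm i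
      _ = (n:ℝ)⁻¹ * (ε * ε)⁻¹ * ∑ i, (R w i) ^ 2 := by
          rw [← Finset.sum_div]
          ring
      _ = (n:ℝ)⁻¹ * (ε * ε)⁻¹ * ‖R w‖ ^ 2 := by rw [euclid_norm_sq]
  -- key residual bound, by cases on the rank condition
  have hkey : ∃ A > (0:ℝ), ∀ w : E d, distillLoss x wstar w ≤ l →
      ‖R w‖ ^ 2 ≤ A * ‖(Tlin x) (R w)‖ ^ 2 := by
    rcases le_or_gt n d with hnd | hdn
    · -- n ≤ d : columns independent, Tlin injective
      have hr : (Xmat x).rank = n := by rw [hrank, min_eq_right hnd]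
      obtain ⟨K, hK0, hK⟩ := (Tlin x).exists_antilipschitzWith (Tlin_ker x hr)
      refine ⟨(K:ℝ) ^ 2, by positivity, fun w _ => ?_⟩
      have := antilip_norm_le hK (R w)
      nlinarith [norm_nonneg (R w), norm_nonneg ((Tlin x) (R w))]
    · -- d < n : rows independent, Slin injective
      have hr : (Xmat x).rank = d := by rw [hrank, min_eq_left hdn.le]
      obtain ⟨K, hK0, hK⟩ := (Slin x).exists_antilipschitzWith (Slin_ker x hr)
      -- uniform bound B on the inner products over the sublevel set
      set B : ℝ := max (-Real.log ε)
        (Finset.univ.sup' Finset.univ_nonempty fun i => |⟪wstar, x i⟫|) with hB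
      have hB0 : 0 ≤ B :=
        le_trans (neg_nonneg.2 (Real.log_nonpos hε0.le hε1.le)) (le_max_left _ _)
      have hBstar : ∀ i, |⟪wstar, x i⟫| ≤ B := fun i =>
        le_trans (Finset.le_sup' (fun i => |⟪wstar, x i⟫|) (Finset.mem_univ i))
          (le_max_right _ _)
      set m : ℝ := Real.exp (-B) / (1 + Real.exp B) ^ 2 with hm
      have hm0 : 0 < m := by rw [hm]; positivity
      refine ⟨(1/4) * ((K:ℝ) * (K:ℝ) / m), by positivity, fun w hw => ?_⟩
      have hBw : ∀ i, |⟪w, x i⟫| ≤ B := by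
        intro i
        obtain ⟨he1, he2⟩ := hεle w hw i
        rw [abs_le]
        constructor
        · have := le_of_sigmoid_le hε0 he1
          have h2 : -B ≤ Real.log ε := by
            have := le_max_left (-Real.log ε)
              (Finset.univ.sup' Finset.univ_nonempty fun i => |⟪wstar, x i⟫|)
            rw [← hB] at this
            linarith
          linarith
        · have := le_of_one_sub_sigmoid hε0 he2
          have h2 : -Real.log ε ≤ B := le_max_left _ _
          linarith
      -- pointwise inequalities
      set S : ℝ := ∑ i, R w i * (⟪w, x i⟫ - ⟪wstar, x i⟫) with hS
      have hpt1 : ∀ i, m * (⟪w, x i⟫ - ⟪wstar, x i⟫) ^ 2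
          ≤ R w i * (⟪w, x i⟫ - ⟪wstar, x i⟫) := by
        intro i
        exact sigmoid_lower_lipschitz hB0 (hBw i) (hBstar i)
      have hpt2 : ∀ i, (R w i) ^ 2 ≤ (1/4) * (R w i * (⟪w, x i⟫ - ⟪wstar, x i⟫)) := by
        intro i
        have hlip := sigmoid_lipschitz ⟪w, x i⟫ ⟪wstar, x i⟫
        have hprod0 : 0 ≤ R w i * (⟪w, x i⟫ - ⟪wstar, x i⟫) := by
          have := hpt1 i
          nlinarith [sq_nonneg (⟪w, x i⟫ - ⟪wstar, x i⟫)]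
        have habs : |R w i| ≤ (1/4) * |⟪w, x i⟫ - ⟪wstar, x i⟫| := hlip
        have h1 : |R w i * (⟪w, x i⟫ - ⟪wstar, x i⟫)| = R w i * (⟪w, x i⟫ - ⟪wstar, x i⟫) :=
          abs_of_nonneg hprod0
        have h2 : |R w i * (⟪w, x i⟫ - ⟪wstar, x i⟫)|
            = |R w i| * |⟪w, x i⟫ - ⟪wstar, x i⟫| := abs_mul _ _
        have e1 : R w i ^ 2 = |R w i| * |R w i| := by
          rw [abs_mul_abs_self]; ring
        have e2 : |R w i| * |R w i| ≤ |R w i| * (1/4 * |⟪w, x i⟫ - ⟪wstar, x i⟫|) :=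
          mul_le_mul_of_nonneg_left habs (abs_nonneg _)
        calc (R w i) ^ 2 = |R w i| * |R w i| := e1
          _ ≤ |R w i| * (1/4 * |⟪w, x i⟫ - ⟪wstar, x i⟫|) := e2
          _ = 1/4 * (|R w i| * |⟪w, x i⟫ - ⟪wstar, x i⟫|) := by ring
          _ = 1/4 * |R w i * (⟪w, x i⟫ - ⟪wstar, x i⟫)| := by rw [← h2]
          _ = 1/4 * (R w i * (⟪w, x i⟫ - ⟪wstar, x i⟫)) := by rw [h1]
      have hS1 : ∑ i, (R w i) ^ 2 ≤ (1/4) * S := by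
        rw [hS, Finset.mul_sum]
        exact Finset.sum_le_sum fun i _ => hpt2 i
      have hS2 : m * ∑ i, (⟪w, x i⟫ - ⟪wstar, x i⟫) ^ 2 ≤ S := by
        rw [hS, Finset.mul_sum]
        exact Finset.sum_le_sum fun i _ => hpt1 i
      have hS3 : S = ⟪(Tlin x) (R w), w - wstar⟫ := by
        rw [inner_Tlin, hS]
        exact Finset.sum_congr rfl fun i _ => by rw [inner_sub_left]
      have hS4 : S ≤ ‖(Tlin x) (R w)‖ * ‖w - wstar‖ := by
        rw [hS3]
        exact real_inner_le_norm _ _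
      have hS5 : ‖w - wstar‖ ≤ (K:ℝ) * ‖(Slin x) (w - wstar)‖ := antilip_norm_le hK _
      have hS6 : ‖(Slin x) (w - wstar)‖ ^ 2 = ∑ i, (⟪w, x i⟫ - ⟪wstar, x i⟫) ^ 2 := by
        rw [euclid_norm_sq]
        congr 1
        funext i
        have : ((Slin x) (w - wstar)) i = ⟪w - wstar, x i⟫ := rfl
        rw [this, inner_sub_left]
      set Q : ℝ := ‖(Slin x) (w - wstar)‖ with hQ
      have hQ0 : 0 ≤ Q := norm_nonneg _
      have hT0 : 0 ≤ ‖(Tlin x) (R w)‖ := norm_nonneg _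
      have hmQ : m * Q ≤ (K:ℝ) * ‖(Tlin x) (R w)‖ := by
        have hq2 : m * Q ^ 2 ≤ S := by rw [hQ, hS6]; exact hS2
        have hS4' : S ≤ ‖(Tlin x) (R w)‖ * ((K:ℝ) * Q) := by
          calc S ≤ ‖(Tlin x) (R w)‖ * ‖w - wstar‖ := hS4
            _ ≤ ‖(Tlin x) (R w)‖ * ((K:ℝ) * Q) := by
                apply mul_le_mul_of_nonneg_left _ hT0
                rw [hQ]
                exact hS5
        rcases eq_or_lt_of_le hQ0 with hq | hq
        · rw [← hq, mul_zero]
          positivity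
        · have h := le_trans hq2 hS4'
          nlinarith
      have hSfin : S ≤ (K:ℝ) * (K:ℝ) / m * ‖(Tlin x) (R w)‖ ^ 2 := by
        have h1 : m * S ≤ m * (‖(Tlin x) (R w)‖ * ‖w - wstar‖) :=
          mul_le_mul_of_nonneg_left hS4 hm0.le
        have h2 : ‖w - wstar‖ ≤ (K:ℝ) * Q := by rw [hQ]; exact hS5
        have h3 : m * S ≤ ‖(Tlin x) (R w)‖ * ((K:ℝ) * (m * Q)) := by
          nlinarith [mul_le_mul_of_nonneg_left h2 (mul_nonneg hm0.le hT0)]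
        have h4 : ‖(Tlin x) (R w)‖ * ((K:ℝ) * (m * Q))
            ≤ ‖(Tlin x) (R w)‖ * ((K:ℝ) * ((K:ℝ) * ‖(Tlin x) (R w)‖)) := by
          apply mul_le_mul_of_nonneg_left _ hT0
          apply mul_le_mul_of_nonneg_left hmQ (by positivity)
        rw [div_mul_eq_mul_div, le_div_iff₀ hm0]
        nlinarith
      rw [euclid_norm_sq]
      calc ∑ i, (R w i) ^ 2 ≤ (1/4) * S := hS1
        _ ≤ (1/4) * ((K:ℝ) * (K:ℝ) / m * ‖(Tlin x) (R w)‖ ^ 2) := by linarith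
        _ = 1/4 * ((K:ℝ) * (K:ℝ) / m) * ‖(Tlin x) (R w)‖ ^ 2 := by ring
  -- assemble
  obtain ⟨A, hA0, hAbound⟩ := hkey
  set C : ℝ := (n:ℝ)⁻¹ * (ε * ε)⁻¹ * A * ((n:ℝ) * (n:ℝ)) with hC
  have hC0 : 0 < C := by rw [hC]; positivity
  refine ⟨(2 * C)⁻¹, by positivity, fun w hw => ?_⟩
  have hLC : distillLoss x wstar w ≤ C * ‖gradient (distillLoss x wstar) w‖ ^ 2 := by
    have h1 := hchi w hw
    have h2 := hAbound w hw
    have h3 : ‖(Tlin x) (R w)‖ ^ 2 = (n:ℝ) * (n:ℝ) * ‖gradient (distillLoss x wstar) w‖ ^ 2 := by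
      rw [hgradnorm w]
      field_simp
    calc distillLoss x wstar w ≤ (n:ℝ)⁻¹ * (ε * ε)⁻¹ * ‖R w‖ ^ 2 := h1
      _ ≤ (n:ℝ)⁻¹ * (ε * ε)⁻¹ * (A * ‖(Tlin x) (R w)‖ ^ 2) := by
          apply mul_le_mul_of_nonneg_left h2 (by positivity)
      _ = C * ‖gradient (distillLoss x wstar) w‖ ^ 2 := by
          rw [h3, hC]
          ring
  calc (2 * C)⁻¹ * distillLoss x wstar w
      ≤ (2 * C)⁻¹ * (C * ‖gradient (distillLoss x wstar) w‖ ^ 2) := by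
        apply mul_le_mul_of_nonneg_left hLC (by positivity)
    _ = 1 / 2 * ‖gradient (distillLoss x wstar) w‖ ^ 2 := by
        field_simp

end
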